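/- If κ : ℝ³ → ℝ^{K₂×K₁} is a steerable kernel, i.e. κ(rx) = ρ₂(r)κ(x)ρ₁(r)⁻¹ for all r ∈ SO(3), then the cross-correlation map f ↦ κ ⋆ f with (κ ⋆ f)(x) = ∫ κ(y − x) f(y) dy is SE(3)-equivariant: κ ⋆ (π₁(g) f) = π₂(g)(κ ⋆ f) for all g ∈ SE(3), where πᵢ are the representations induced from ρᵢ. -/
import Mathlib


open Matrix MeasureTheory

abbrev SO3 := Matrix.specialOrthogonalGroup (Fin 3) ℝ

/-- Action of a rotation on ℝ³. -/
noncomputable def rot (r : SO3) (x : Fin 3 → ℝ) : Fin 3 → ℝ :=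
  (r : Matrix (Fin 3) (Fin 3) ℝ).mulVec x

/-- Action of the inverse of a rotation on ℝ³. -/
noncomputable def rotInv (r : SO3) (x : Fin 3 → ℝ) : Fin 3 → ℝ :=
  ((r : Matrix (Fin 3) (Fin 3) ℝ))⁻¹.mulVec x

lemma so3_det (r : SO3) : ((r : Matrix (Fin 3) (Fin 3) ℝ)).det = 1 := r.prop.2

lemma so3_isUnit (r : SO3) : IsUnit ((r : Matrix (Fin 3) (Fin 3) ℝ)).det := by
  rw [so3_det]; exact isUnit_one

lemma rot_rotInv (r : SO3) (v : Fin 3 → ℝ) : rot r (rotInv r v) = v := by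
  simp [rot, rotInv, Matrix.mulVec_mulVec, Matrix.mul_nonsing_inv _ (so3_isUnit r)]

lemma rotInv_rot (r : SO3) (v : Fin 3 → ℝ) : rotInv r (rot r v) = v := by
  simp [rot, rotInv, Matrix.mulVec_mulVec, Matrix.nonsing_inv_mul _ (so3_isUnit r)]

/-- rot r is measure preserving. -/
lemma rot_measurePreserving (r : SO3) :
    MeasurePreserving (rot r) (volume : Measure (Fin 3 → ℝ)) volume := by
  have h : rot r = Matrix.toLin' (r : Matrix (Fin 3) (Fin 3) ℝ) := by
    ext v i; simp [rot, Matrix.toLin'_apply]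
  constructor
  · rw [h]; exact (LinearMap.continuous_of_finiteDimensional _).measurable
  · rw [h, Real.map_matrix_volume_pi_eq_smul_volume_pi (by rw [so3_det]; norm_num)]
    simp [so3_det]

lemma rot_measurableEmbedding (r : SO3) : MeasurableEmbedding (rot r) := by
  have : Function.Injective (rot r) := by
    intro a b hab
    have := congrArg (rotInv r) hab
    rwa [rotInv_rot, rotInv_rot] at this
  exact (rot_measurePreserving r).measurable.measurableEmbedding this

/-- If κ is a rotation-steerable kernel, then cross-correlation with κ is SE(3)-equivariant:
κ ⋆ (π₁(g) f) = π₂(g)(κ ⋆ f) for every g = (t,r) ∈ SE(3), where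
[πᵢ(t,r)f](x) = ρᵢ(r) f(r⁻¹(x−t)) and (κ ⋆ f)(x) = ∫ κ(y − x) f(y) dy. -/
theorem stmt4 {K₁ K₂ : ℕ}
    (ρ₁ : SO3 → Matrix (Fin K₁) (Fin K₁) ℝ)
    (ρ₂ : SO3 → Matrix (Fin K₂) (Fin K₂) ℝ)
    (hρ₁mul : ∀ r r' : SO3, ρ₁ (r * r') = ρ₁ r * ρ₁ r')
    (hρ₂mul : ∀ r r' : SO3, ρ₂ (r * r') = ρ₂ r * ρ₂ r')
    (hρ₁inv : ∀ r, IsUnit (ρ₁ r)) (hρ₂inv : ∀ r, IsUnit (ρ₂ r))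
    (κ : (Fin 3 → ℝ) → Matrix (Fin K₂) (Fin K₁) ℝ)
    (hκ : Continuous κ)
    (hsteer : ∀ (r : SO3) (x : Fin 3 → ℝ), κ (rot r x) = ρ₂ r * κ x * (ρ₁ r)⁻¹) :
    ∀ (t : Fin 3 → ℝ) (r : SO3) (f : (Fin 3 → ℝ) → (Fin K₁ → ℝ)),
      Continuous f → HasCompactSupport f →
      ∀ x : Fin 3 → ℝ,
        (∫ y, (κ (y - x)).mulVec ((ρ₁ r).mulVec (f (rotInv r (y - t)))))
          = (ρ₂ r).mulVec (∫ y, (κ (y - rotInv r (x - t))).mulVec (f y)) := by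
  intro t r f hf hfc x
  set x' := rotInv r (x - t) with hx'
  set g : (Fin 3 → ℝ) → (Fin K₂ → ℝ) := fun z => (κ (z - x')).mulVec (f z) with hg
  -- integrability of g
  have hgcont : Continuous g := by
    apply Continuous.matrix_mulVec
    · exact hκ.comp (continuous_id.sub continuous_const)
    · exact hf
  have hgsupp : HasCompactSupport g := by
    apply hfc.mono
    intro z hz
    intro hfz
    exact hz (by simp [hg, hfz])
  have hgint : Integrable g := hgcont.integrable_of_hasCompactSupport hgsupp
  -- continuous linear map given by ρ₂ r
  let L : (Fin K₂ → ℝ) →L[ℝ] (Fin K₂ → ℝ) :=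
    LinearMap.toContinuousLinearMap ((ρ₂ r).mulVecLin)
  have hL : ∀ v, L v = (ρ₂ r).mulVec v := fun v => rfl
  -- RHS = integral of ρ₂ ∘ g
  have hRHS : (ρ₂ r).mulVec (∫ y, (κ (y - x')).mulVec (f y)) = ∫ y, L (g y) := by
    rw [L.integral_comp_comm hgint]; rfl
  rw [hRHS]
  -- change of variables on LHS
  set F : (Fin 3 → ℝ) → (Fin K₂ → ℝ) :=
    fun y => (κ (y - x)).mulVec ((ρ₁ r).mulVec (f (rotInv r (y - t)))) with hF
  have key : ∀ z, F (rot r z + t) = L (g z) := by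
    intro z
    have h1 : rot r z + t - x = rot r (z - x') := by
      simp only [rot, rotInv, hx', Matrix.mulVec_sub, Matrix.mulVec_mulVec,
        Matrix.mul_nonsing_inv _ (so3_isUnit r), Matrix.one_mulVec]
      abel
    have h2 : rotInv r (rot r z + t - t) = z := by
      simp only [add_sub_cancel_right]; exact rotInv_rot r z
    simp only [hF, h1, h2, hsteer r (z - x'), hL, hg]
    simp only [Matrix.mulVec_mulVec]
    rw [Matrix.mul_assoc, Matrix.nonsing_inv_mul _ ((Matrix.isUnit_iff_isUnit_det _).1 (hρ₁inv r)),
      Matrix.mul_one]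
  calc (∫ y, F y) = ∫ y, F (y + t) := (integral_add_right_eq_self F t).symm
    _ = ∫ z, F (rot r z + t) :=
        ((rot_measurePreserving r).integral_comp (rot_measurableEmbedding r)
          (fun y => F (y + t))).symm
    _ = ∫ z, L (g z) := by simp only [key]
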